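/- arXiv:1506.07235 — 6 statements merged into one kernel-verified Lean document; each statement's English description precedes it below -/
import Mathlib

section
/- Let f : G → A be an arbitrary function from a finite group G into a finite abelian group A, and let {g₁, …, gₙ} ⊆ G be a complete set of representatives for the left cosets of the stabilizer Stab_G(f) = {a ∈ G : f^a = f} in G (so that {f^{g₁}, …, f^{gₙ}} is the orbit of f under the function action, each orbit element appearing exactly once). Then the average function f̄ : G → A defined by f̄(x) = f^{g₁}(x) · f^{g₂}(x) ⋯ f^{gₙ}(x) is a group homomorphism from G to A. -/
/-- The conjugate of an arbitrary function `f : G → A` by `a ∈ G`: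
`f^a(x) = f(a)⁻¹ f(ax)`. -/
def fConj {G A : Type*} [Group G] [CommGroup A] (f : G → A) (a : G) : G → A :=
  fun x => (f a)⁻¹ * f (a * x)

lemma fConj_mul {G A : Type*} [Group G] [CommGroup A] (f : G → A) (a b : G) :
    fConj f (a * b) = fConj (fConj f a) b := by
  funext x
  simp only [fConj, mul_assoc]
  group

lemma fConj_cancel {G A : Type*} [Group G] [CommGroup A] (f : G → A) {a b : G}
    (h : fConj f a = fConj f b) (c : G) : fConj f (a * c) = fConj f (b * c) := by
  rw [fConj_mul, fConj_mul, h]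

/-- If `{g₁, …, gₙ}` (the finset `S`) is a set of representatives for the
cosets of `Stab_G(f)` in `G`, i.e. `{f^s : s ∈ S}` is the orbit of `f` under
the function action with each orbit element appearing exactly once, then the
average function `f̄(x) = ∏ s ∈ S, f^s(x)` is a homomorphism into the abelian
group `A`. -/
theorem average_function_is_hom {G A : Type*} [Group G] [Finite G]
    [CommGroup A] [Finite A] (f : G → A) (S : Finset G)
    (hS : ∀ g : G, ∃! s, s ∈ S ∧ fConj f s = fConj f g) :
    ∀ x y : G,
      (∏ s ∈ S, fConj f s (x * y)) =
        (∏ s ∈ S, fConj f s x) * (∏ s ∈ S, fConj f s y) := by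
  classical
  -- representative function
  choose r hrS hrc using fun g => (hS g).exists
  have huniq : ∀ (g t : G), t ∈ S → fConj f t = fConj f g → t = r g := by
    intro g t ht hc
    exact (hS g).unique ⟨ht, hc⟩ ⟨hrS g, hrc g⟩
  intro x y
  have key : ∀ s, fConj f s (x * y) = fConj f s x * fConj f (s * x) y := by
    intro s
    simp only [fConj, mul_assoc]
    group
  rw [Finset.prod_congr rfl (fun s _ => key s), Finset.prod_mul_distrib]
  congr 1
  -- reindex the product over s ↦ r (s * x)
  have step1 : ∀ s ∈ S, fConj f (s * x) y = fConj f (r (s * x)) y := by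
    intro s _
    rw [hrc (s * x)]
  rw [Finset.prod_congr rfl step1]
  refine Finset.prod_nbij' (fun s => r (s * x)) (fun t => r (t * x⁻¹)) ?_ ?_ ?_ ?_ ?_
  · intro s _; exact hrS _
  · intro t _; exact hrS _
  · -- left inverse : r (r (s*x) * x⁻¹) = s  for s ∈ S
    intro s hs
    symm
    apply huniq
    · exact hs
    · have h1 : fConj f (r (s * x)) = fConj f (s * x) := hrc _
      have := fConj_cancel f h1 x⁻¹
      simpa [mul_assoc] using this.symm
  · intro t ht
    symm
    apply huniq
    · exact ht
    · have h1 : fConj f (r (t * x⁻¹)) = fConj f (t * x⁻¹) := hrc _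
      have := fConj_cancel f h1 x
      simpa [mul_assoc] using this.symm
  · intro s _
    rfl
end

section
/- Let f : G → H be an arbitrary function between finite groups. Let f(G) = ⟨f(g) : g ∈ G⟩ denote the subgroup of H generated by the image of f, and let [G,G;f] = ⟨[x,y;f] : x, y ∈ G⟩ be the subgroup generated by all f-distributors. Then [G,G;f] is a normal subgroup of f(G), and the composition π∘f : G → f(G)/[G,G;f] of f with the quotient projection π is a group homomorphism. -/
/-- The `f`-distributor of `x` and `y`: `[x, y; f] = f(y)⁻¹ f(x)⁻¹ f(xy)`. -/
def fDist {G H : Type*} [Group G] [Group H] (f : G → H) (x y : G) : H :=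
  (f y)⁻¹ * (f x)⁻¹ * f (x * y)

lemma fDist_conj {G H : Type*} [Group G] [Group H] (f : G → H) (x y g : G) :
    (f g)⁻¹ * fDist f x y * f g =
      fDist f y g * fDist f x (y * g) * (fDist f (x * y) g)⁻¹ := by
  simp [fDist, mul_assoc]

/-- Let `f(G) = ⟨f(g) : g ∈ G⟩` and `[G,G;f] = ⟨[x,y;f] : x,y ∈ G⟩`.
Then `[G,G;f]` is a normal subgroup of `f(G)`, and composing `f` with the
projection onto the quotient is a homomorphism, i.e.
`f(xy) ≡ f(x) f(y)` modulo `[G,G;f]`. -/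
theorem distributor_subgroup_normal {G H : Type*} [Group G] [Group H]
    [Finite G] [Finite H] (f : G → H) :
    Subgroup.closure {d : H | ∃ x y : G, d = fDist f x y} ≤
        Subgroup.closure (Set.range f) ∧
    (∀ a ∈ Subgroup.closure (Set.range f),
      ∀ d ∈ Subgroup.closure {d : H | ∃ x y : G, d = fDist f x y},
        a⁻¹ * d * a ∈ Subgroup.closure {d : H | ∃ x y : G, d = fDist f x y}) ∧
    (∀ x y : G,
      (f x * f y)⁻¹ * f (x * y) ∈
        Subgroup.closure {d : H | ∃ x y : G, d = fDist f x y}) := by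
  set S : Set H := {d : H | ∃ x y : G, d = fDist f x y} with hS
  set D : Subgroup H := Subgroup.closure S with hD
  have hgen : ∀ x y : G, fDist f x y ∈ D := fun x y =>
    Subgroup.subset_closure ⟨x, y, rfl⟩
  -- conjugation by (f g)⁻¹ sends D into D
  have key : ∀ g : G, ∀ d ∈ D, (f g)⁻¹ * d * f g ∈ D := by
    intro g d hd
    induction hd using Subgroup.closure_induction with
    | mem d hdm =>
      obtain ⟨x, y, rfl⟩ := hdm
      rw [fDist_conj]
      exact mul_mem (mul_mem (hgen _ _) (hgen _ _)) (inv_mem (hgen _ _))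
    | one => simpa using one_mem D
    | mul a b _ _ ha hb =>
      have : (f g)⁻¹ * (a * b) * f g = ((f g)⁻¹ * a * f g) * ((f g)⁻¹ * b * f g) := by
        group
      rw [this]; exact mul_mem ha hb
    | inv a _ ha =>
      have : (f g)⁻¹ * a⁻¹ * f g = ((f g)⁻¹ * a * f g)⁻¹ := by group
      rw [this]; exact inv_mem ha
  -- use finiteness to get the reverse conjugation
  have key' : ∀ g : G, ∀ d ∈ D, f g * d * (f g)⁻¹ ∈ D := by
    intro g
    set e : H ≃* H := MulAut.conj (f g)⁻¹ with he
    have hmap : D.map e.toMonoidHom ≤ D := by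
      rintro _ ⟨d, hd, rfl⟩
      have : e.toMonoidHom d = (f g)⁻¹ * d * f g := by
        simp [he, MulAut.conj, mul_assoc]
      rw [this]; exact key g d hd
    have hcard : Nat.card D ≤ Nat.card (D.map e.toMonoidHom) :=
      (Nat.card_congr (D.equivMapOfInjective e.toMonoidHom e.injective).toEquiv).le
    have heq : D.map e.toMonoidHom = D :=
      Subgroup.eq_of_le_of_card_ge hmap hcard
    intro d hd
    have hd' : d ∈ D.map e.toMonoidHom := heq.ge hd
    obtain ⟨d', hd', hed⟩ := hd'
    have : e.toMonoidHom d' = (f g)⁻¹ * d' * f g := by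
      simp [he, MulAut.conj, mul_assoc]
    rw [this] at hed
    have : f g * d * (f g)⁻¹ = d' := by rw [← hed]; group
    rw [this]; exact hd'
  have main : ∀ a ∈ Subgroup.closure (Set.range f),
      (∀ d ∈ D, a⁻¹ * d * a ∈ D) ∧ (∀ d ∈ D, a * d * a⁻¹ ∈ D) := by
    intro a ha
    induction ha using Subgroup.closure_induction with
    | mem a ham =>
      obtain ⟨g, rfl⟩ := ham
      exact ⟨key g, key' g⟩
    | one => exact ⟨fun d hd => by simpa using hd, fun d hd => by simpa using hd⟩
    | mul a b _ _ ha hb =>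
      refine ⟨fun d hd => ?_, fun d hd => ?_⟩
      · have : (a * b)⁻¹ * d * (a * b) = b⁻¹ * (a⁻¹ * d * a) * b := by group
        rw [this]; exact hb.1 _ (ha.1 _ hd)
      · have : (a * b) * d * (a * b)⁻¹ = a * (b * d * b⁻¹) * a⁻¹ := by group
        rw [this]; exact ha.2 _ (hb.2 _ hd)
    | inv a _ ha =>
      refine ⟨fun d hd => by simpa using ha.2 d hd, fun d hd => by simpa using ha.1 d hd⟩
  refine ⟨?_, fun a ha => (main a ha).1, ?_⟩
  · apply Subgroup.closure_le _ |>.mpr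
    rintro _ ⟨x, y, rfl⟩
    have hm : ∀ z : G, f z ∈ Subgroup.closure (Set.range f) := fun z =>
      Subgroup.subset_closure ⟨z, rfl⟩
    exact mul_mem (mul_mem (inv_mem (hm y)) (inv_mem (hm x))) (hm _)
  · intro x y
    have : (f x * f y)⁻¹ * f (x * y) = fDist f x y := by rw [fDist]; group
    rw [this]; exact hgen x y
end

section
/- Let G and H be finite groups, let A be an abelian normal subgroup of H with gcd(|A|, |G|) = 1, and let f : G → H/A be a group homomorphism. Then f lifts to a group homomorphism f̂ : G → H, i.e., there exists a homomorphism f̂ : G → H such that the composition of f̂ with the projection H → H/A equals f. -/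
/-- If `A ⊴ H` is an abelian normal subgroup with `|A|` coprime to `|G|`, then
every homomorphism `f : G → H/A` lifts to a homomorphism `f̂ : G → H`. -/
theorem lift_hom_abelian_kernel {G H : Type*} [Group G] [Group H]
    [Finite G] [Finite H] (A : Subgroup H) [A.Normal]
    (hAcomm : ∀ a ∈ A, ∀ b ∈ A, a * b = b * a)
    (hcop : Nat.Coprime (Nat.card A) (Nat.card G))
    (f : G →* H ⧸ A) :
    ∃ fhat : G →* H, (QuotientGroup.mk' A).comp fhat = f := by
  classical
  -- pullback subgroup P ≤ G × H
  set P : Subgroup (G × H) :=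
    MonoidHom.eqLocus (f.comp (MonoidHom.fst G H))
      ((QuotientGroup.mk' A).comp (MonoidHom.snd G H)) with hP
  have memP : ∀ p : G × H, p ∈ P ↔ f p.1 = QuotientGroup.mk' A p.2 := fun p => Iff.rfl
  -- projection to G
  let π : P →* G := (MonoidHom.fst G H).comp P.subtype
  have hπsurj : Function.Surjective π := by
    intro g
    obtain ⟨h, hh⟩ := QuotientGroup.mk'_surjective A (f g)
    exact ⟨⟨(g, h), by simp [memP, hh]⟩, rfl⟩
  -- kernel N of π
  set N : Subgroup P := π.ker with hN
  -- N ≃ A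
  have eNA : N ≃ A := by
    refine ⟨fun n => ⟨(n : P).1.2, ?_⟩, fun a => ⟨⟨(1, a.1), ?_⟩, ?_⟩, ?_, ?_⟩
    · have h1 : ((n : P) : G × H).1 = 1 := n.2
      have h2 := (n : P).2
      rw [memP] at h2
      rw [h1, map_one] at h2
      exact (QuotientGroup.eq_one_iff _).mp h2.symm
    · rw [memP]
      simp [(QuotientGroup.eq_one_iff _).mpr a.2]
    · show ((1 : G), a.1).1 = 1; rfl
    · rintro ⟨n, hn⟩
      have h1 : ((n : G × H)).1 = 1 := hn
      ext
      · exact h1.symm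
      · rfl
    · intro a; ext; rfl
  have hcardN : Nat.card N = Nat.card A := Nat.card_congr eNA
  have hindexN : N.index = Nat.card G := by
    rw [Subgroup.index, Nat.card_congr
      (QuotientGroup.quotientKerEquivOfSurjective π hπsurj).toEquiv]
  have hcop' : Nat.Coprime (Nat.card N) N.index := by
    rw [hcardN, hindexN]; exact hcop
  obtain ⟨C, hC⟩ := Subgroup.exists_right_complement'_of_coprime hcop'
  -- π restricted to C is bijective
  let πC : C →* G := π.comp C.subtype
  have hinj : Function.Injective πC := by
    rw [← MonoidHom.ker_eq_bot_iff, eq_bot_iff]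
    intro c hc
    have hcN : (c : P) ∈ N := hc
    have : (c : P) = 1 := Subgroup.disjoint_def.mp hC.disjoint hcN c.2
    simpa [Subgroup.mem_bot] using Subtype.ext this
  have hcardC : Nat.card C = Nat.card G := by
    rw [← hindexN, hC.symm.index_eq_card]
  have hbij : Function.Bijective πC :=
    (Nat.bijective_iff_injective_and_card πC).mpr ⟨hinj, hcardC⟩
  let e : C ≃* G := MulEquiv.ofBijective πC hbij
  refine ⟨((MonoidHom.snd G H).comp (P.subtype.comp C.subtype)).comp e.symm.toMonoidHom, ?_⟩
  ext g
  set c : C := e.symm g with hc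
  have hc1 : ((c : P) : G × H).1 = g := by
    have := e.apply_symm_apply g
    exact this
  have hc2 := (c : P).2
  rw [memP] at hc2
  show (QuotientGroup.mk' A) ((c : P) : G × H).2 = f g
  rw [← hc2, hc1]
end

section
/- Let G and H be finite groups, let N be a soluble (solvable) normal subgroup of H with gcd(|N|, |G|) = 1, and let f : G → H/N be a group homomorphism. Then f lifts to a group homomorphism f̂ : G → H, i.e., there exists a homomorphism f̂ : G → H such that the composition of f̂ with the projection H → H/N equals f. -/
/-- If `N ⊴ H` is a soluble normal subgroup with `|N|` coprime to `|G|`, then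
every homomorphism `f : G → H/N` lifts to a homomorphism `f̂ : G → H`. -/
theorem lift_hom_solvable_kernel {G H : Type*} [Group G] [Group H]
    [Finite G] [Finite H] (N : Subgroup H) [N.Normal]
    (hsol : IsSolvable N)
    (hcop : Nat.Coprime (Nat.card N) (Nat.card G))
    (f : G →* H ⧸ N) :
    ∃ fhat : G →* H, (QuotientGroup.mk' N).comp fhat = f := by
  classical
  -- the pullback subgroup of `G × H`
  let K : Subgroup (G × H) :=
    { carrier := {p | f p.1 = QuotientGroup.mk p.2}
      one_mem' := by simp
      mul_mem' := by
        intro a b ha hb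
        simp only [Set.mem_setOf_eq] at *
        simp [QuotientGroup.mk_mul, ha, hb]
      inv_mem' := by
        intro a ha
        simp only [Set.mem_setOf_eq] at *
        simp [ha] }
  let π : K →* G := (MonoidHom.fst G H).comp K.subtype
  have hsurj : Function.Surjective π := by
    intro g
    obtain ⟨h, hh⟩ := QuotientGroup.mk'_surjective N (f g)
    exact ⟨⟨(g, h), hh.symm⟩, rfl⟩
  -- kernel of π is isomorphic to N
  have hkercard : Nat.card π.ker = Nat.card N := by
    have : π.ker ≃ N := by
      refine Equiv.ofBijective (fun x => ⟨x.1.1.2, ?_⟩) ⟨?_, ?_⟩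
      · have h1 : (x : K).1.1 = 1 := x.2
        have h2 : f (x : K).1.1 = QuotientGroup.mk (x : K).1.2 := x.1.2
        rw [h1, map_one] at h2
        exact (QuotientGroup.eq_one_iff _).mp h2.symm
      · rintro ⟨⟨⟨a, b⟩, hab⟩, hx⟩ ⟨⟨⟨c, d⟩, hcd⟩, hy⟩ h
        have hx' : a = 1 := hx
        have hy' : c = 1 := hy
        simp only [Subtype.mk.injEq] at h ⊢
        exact Prod.ext (hx'.trans hy'.symm) h
      · rintro ⟨n, hn⟩
        refine ⟨⟨⟨(1, n), ?_⟩, ?_⟩, rfl⟩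
        · show f 1 = QuotientGroup.mk n
          rw [map_one]
          exact ((QuotientGroup.eq_one_iff n).mpr hn).symm
        · rfl
    exact Nat.card_congr this
  have hindex : π.ker.index = Nat.card G := by
    rw [Subgroup.index_ker, MonoidHom.range_eq_top.mpr hsurj]
    exact Nat.card_congr Subgroup.topEquiv.toEquiv
  -- Schur–Zassenhaus
  obtain ⟨C, hC⟩ := Subgroup.exists_right_complement'_of_coprime
    (N := π.ker) (by rw [hkercard, hindex]; exact hcop)
  -- π restricted to C is bijective
  let φ : C →* G := π.comp C.subtype
  have hφinj : Function.Injective φ := by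
    rw [← MonoidHom.ker_eq_bot_iff]
    rw [eq_bot_iff]
    intro x hx
    have : (x : K) ∈ π.ker ⊓ C := ⟨hx, x.2⟩
    rw [hC.disjoint.eq_bot] at this
    have : (x : K) = 1 := this
    exact Subtype.ext this
  have hcardC : Nat.card C = Nat.card G := by
    rw [← hindex, hC.symm.index_eq_card]
  have hφbij : Function.Bijective φ :=
    (Nat.bijective_iff_injective_and_card φ).mpr ⟨hφinj, hcardC⟩
  let e : C ≃* G := MulEquiv.ofBijective φ hφbij
  refine ⟨((MonoidHom.snd G H).comp (K.subtype.comp C.subtype)).comp e.symm.toMonoidHom, ?_⟩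
  ext g
  have h1 : φ (e.symm g) = g := e.apply_symm_apply g
  have h1' : ((e.symm g : K) : G × H).1 = g := h1
  have h2 : f ((e.symm g : K) : G × H).1 = QuotientGroup.mk ((e.symm g : K) : G × H).2 :=
    (e.symm g : K).2
  rw [h1'] at h2
  exact h2.symm
end

section
/- Let G and H be finite groups, let A be an abelian normal subgroup of H with gcd(|A|, |G|) = 1, and let f : G → H/A be a group homomorphism. If f₁, f₂ : G → H are two group homomorphisms lifting f (i.e., each composed with the projection H → H/A equals f), then f₁ and f₂ are conjugate by an element of A: there exists a ∈ A such that f₁(x) = a⁻¹ f₂(x) a for all x ∈ G. -/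
/-- If `A ⊴ H` is an abelian normal subgroup with `|A|` coprime to `|G|`, then
any two homomorphisms `f₁, f₂ : G → H` lifting the same homomorphism
`f : G → H/A` are conjugate by an element of `A`. -/
theorem lifts_conjugate_abelian_kernel {G H : Type*} [Group G] [Group H]
    [Finite G] [Finite H] (A : Subgroup H) [A.Normal]
    (hAcomm : ∀ a ∈ A, ∀ b ∈ A, a * b = b * a)
    (hcop : Nat.Coprime (Nat.card A) (Nat.card G))
    (f : G →* H ⧸ A) (f₁ f₂ : G →* H)
    (h₁ : (QuotientGroup.mk' A).comp f₁ = f)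
    (h₂ : (QuotientGroup.mk' A).comp f₂ = f) :
    ∃ a ∈ A, ∀ x : G, f₁ x = a⁻¹ * f₂ x * a := by
  classical
  letI : Fintype G := Fintype.ofFinite G
  letI : CommGroup A :=
    { (inferInstance : Group A) with
      mul_comm := fun a b => Subtype.ext (hAcomm a a.2 b b.2) }
  have hnorm : A.Normal := inferInstance
  -- the cocycle
  have hmem : ∀ x : G, (f₂ x)⁻¹ * f₁ x ∈ A := by
    intro x
    have : (QuotientGroup.mk' A) (f₁ x) = (QuotientGroup.mk' A) (f₂ x) := by
      rw [← MonoidHom.comp_apply, ← MonoidHom.comp_apply, h₁, h₂]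
    have := (QuotientGroup.eq (s := A)).mp this.symm
    exact this
  set c : G → A := fun x => ⟨(f₂ x)⁻¹ * f₁ x, hmem x⟩ with hc
  -- conjugation by f₂ y as an endomorphism of A
  set σ : G → (A →* A) := fun y =>
    { toFun := fun t => ⟨(f₂ y)⁻¹ * t * f₂ y, by
        have := hnorm.conj_mem t t.2 (f₂ y)⁻¹
        simpa using this⟩
      map_one' := by ext; simp
      map_mul' := by intro s t; ext; simp; group } with hσ
  have hσcoe : ∀ (y : G) (t : A), ((σ y t : A) : H) = (f₂ y)⁻¹ * t * f₂ y :=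
    fun y t => rfl
  -- cocycle identity
  have hcoc : ∀ x y : G, c (x * y) = σ y (c x) * c y := by
    intro x y
    ext
    simp only [hc, hσcoe, Subgroup.coe_mul, map_mul]
    group
  set n := Nat.card G with hn
  set b : A := ∏ x : G, c x with hb
  have key : ∀ y : G, (c y) ^ n = b * (σ y b)⁻¹ := by
    intro y
    have h1 : (∏ x : G, c (x * y)) = b := by
      refine Fintype.prod_equiv (Equiv.mulRight y) _ _ (fun x => rfl)
    have h2 : (∏ x : G, c (x * y)) = σ y b * (c y) ^ n := by
      calc (∏ x : G, c (x * y)) = ∏ x : G, (σ y (c x) * c y) := by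
            simp only [hcoc]
        _ = (∏ x : G, σ y (c x)) * ∏ _x : G, c y := by
            rw [Finset.prod_mul_distrib]
        _ = σ y b * (c y) ^ n := by
            rw [← map_prod, Finset.prod_const, Finset.card_univ, hn,
              Nat.card_eq_fintype_card]
    rw [h1] at h2
    rw [eq_mul_inv_iff_mul_eq, mul_comm]
    exact h2.symm
  -- use coprimality to take an "n-th root"
  set m := Nat.card A with hm
  have hmpos : 0 < m := Nat.card_pos
  have htot : 1 ≤ Nat.totient m := Nat.totient_pos.mpr hmpos
  set k := n ^ (Nat.totient m - 1) with hk
  have hnk : n * k ≡ 1 [MOD m] := by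
    have : n * k = n ^ Nat.totient m := by
      rw [hk, ← pow_succ']
      congr 1
      omega
    rw [this]
    exact Nat.ModEq.pow_totient hcop.symm
  have hroot : ∀ t : A, (t ^ n) ^ k = t := by
    intro t
    rw [← pow_mul]
    have hdvd : orderOf t ∣ m := hm ▸ orderOf_dvd_natCard t
    have : n * k ≡ 1 [MOD orderOf t] := hnk.of_dvd hdvd
    calc t ^ (n * k) = t ^ 1 := (pow_eq_pow_iff_modEq).mpr this
      _ = t := pow_one t
  refine ⟨((b ^ k : A) : H), (b ^ k : A).2, fun x => ?_⟩
  have hx : c x = (σ x (b ^ k))⁻¹ * b ^ k := by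
    have := hroot (c x)
    rw [key x] at this
    rw [← this, mul_pow, inv_pow, map_pow, mul_comm]
  have hx' := congrArg (Subtype.val) hx
  simp only [hc, Subgroup.coe_mul, Subgroup.coe_inv, hσcoe] at hx'
  have h3 : f₁ x = f₂ x * (((f₂ x)⁻¹ * ↑(b ^ k) * f₂ x)⁻¹ * ↑(b ^ k)) := by
    rw [← hx']; group
  rw [h3]; group
end

section
/- Let G and H be finite groups, let N be a soluble (solvable) normal subgroup of H with gcd(|N|, |G|) = 1, and let f : G → H/N be a group homomorphism. If f₁, f₂ : G → H are two group homomorphisms lifting f (i.e., each composed with the projection H → H/N equals f), then f₁ and f₂ are conjugate by an element of N: there exists n ∈ N such that f₁(x) = n⁻¹ f₂(x) n for all x ∈ G. -/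
open Finset Subgroup
open scoped IsMulCommutative

/-! If `f₁ f₂ : G →* H` agree modulo `N`, then `c x = f₂ x * (f₁ x)⁻¹` is a crossed homomorphism
`G → N` for the conjugation action through `f₁`, and `f₁, f₂` are conjugate by an element of `N`
exactly when `c` is a coboundary. For abelian `N` this is the vanishing of `H¹(G, N)` for coprime
orders: the `|G|`-th root of `∏ y, c y`, which exists since `|N|` is coprime to `|G|`, is the
conjugating element. For solvable `N` one inducts along the derived series: the abelian case
in `H ⧸ ⁅N, N⁆` conjugates `f₂` into a homomorphism that agrees with `f₁` modulo `⁅N, N⁆`. -/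

theorem exists_eq_mul_inv_apply_of_coprime {G A : Type*} [Group G] [Finite G] [CommGroup A]
    (hcop : (Nat.card A).Coprime (Nat.card G)) (φ : G →* MulAut A) (c : G → A)
    (hc : ∀ x y, c (x * y) = c x * φ x (c y)) : ∃ m : A, ∀ x, c x = m * (φ x m)⁻¹ := by
  have := Fintype.ofFinite G
  have hS : ∀ x, c x ^ Nat.card G * φ x (∏ y, c y) = ∏ y, c y := fun x => calc
    c x ^ Nat.card G * φ x (∏ y, c y) = ∏ y, c x * φ x (c y) := by
      rw [prod_mul_distrib, prod_const, card_univ, Nat.card_eq_fintype_card, map_prod]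
    _ = ∏ y, c (x * y) := by simp_rw [hc]
    _ = ∏ y, c y := Fintype.prod_equiv (Equiv.mulLeft x) _ _ fun _ => rfl
  obtain ⟨m, hm⟩ := (powCoprime hcop).surjective (∏ y, c y)
  refine ⟨m, fun x => (powCoprime hcop).injective ?_⟩
  rw [powCoprime_apply] at hm
  rw [powCoprime_apply, powCoprime_apply, mul_pow, inv_pow, ← map_pow, hm, eq_mul_inv_iff_mul_eq]
  exact hS x

theorem exists_conj_eq_of_isMulCommutative {G H : Type*} [Group G] [Group H] [Finite G]
    {A : Subgroup H} [A.Normal] [IsMulCommutative A] (hcop : (Nat.card A).Coprime (Nat.card G))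
    {f₁ f₂ : G →* H} (h : (QuotientGroup.mk' A).comp f₁ = (QuotientGroup.mk' A).comp f₂) :
    ∃ n ∈ A, ∀ x, f₁ x = n⁻¹ * f₂ x * n := by
  have hmem (x : G) : f₂ x * (f₁ x)⁻¹ ∈ A :=
    (Normal.mem_comm_iff inferInstance).mp (QuotientGroup.eq.mp (DFunLike.congr_fun h x))
  obtain ⟨m, hm⟩ := exists_eq_mul_inv_apply_of_coprime hcop (MulAut.conjNormal.comp f₁)
    (fun x => ⟨_, hmem x⟩) fun x y => by ext; simp [MulAut.conjNormal_apply]; group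
  refine ⟨m, m.2, fun x => ?_⟩
  have hx := congr_arg Subtype.val (hm x)
  simp only [MonoidHom.comp_apply, Subgroup.coe_mul, Subgroup.coe_inv,
    MulAut.conjNormal_apply] at hx
  rw [mul_inv_eq_iff_eq_mul] at hx
  rw [hx]; group

theorem Subgroup.isMulCommutative_map_mk'_commutator {H : Type*} [Group H] (N : Subgroup H)
    [N.Normal] :
    IsMulCommutative (N.map (QuotientGroup.mk' ⁅N, N⁆)) := by
  rw [← commutator_self_eq_bot_iff, ← map_commutator, map_eq_bot_iff, QuotientGroup.ker_mk']

theorem Subgroup.map_subtype_derivedSeries {H : Type*} [Group H] (N : Subgroup H) (n : ℕ) :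
    (derivedSeries N n).map N.subtype = (fun K : Subgroup H => ⁅K, K⁆)^[n] N := by
  induction n with
  | zero => rw [derivedSeries_zero, ← MonoidHom.range_eq_map, range_subtype]; rfl
  | succ n ih => rw [derivedSeries_succ, map_commutator, ih, Function.iterate_succ_apply']

theorem Subgroup.exists_iterate_commutator_eq_bot {H : Type*} [Group H] {N : Subgroup H}
    (hN : Group.IsSolvable N) : ∃ n, (fun K : Subgroup H => ⁅K, K⁆)^[n] N = ⊥ := by
  obtain ⟨n, hn⟩ := hN.solvable
  exact ⟨n, by rw [← map_subtype_derivedSeries, hn, map_bot]⟩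

theorem QuotientGroup.mk'_map_comp_eq {G H K : Type*} [Group G] [Group H] [Group K]
    {N : Subgroup H} [N.Normal] (φ : H →* K) [(N.map φ).Normal] {f₁ f₂ : G →* H}
    (h : (mk' N).comp f₁ = (mk' N).comp f₂) :
    (mk' (N.map φ)).comp (φ.comp f₁) = (mk' (N.map φ)).comp (φ.comp f₂) := by
  ext x
  simpa [QuotientGroup.eq] using mem_map_of_mem φ (QuotientGroup.eq.mp (DFunLike.congr_fun h x))

theorem exists_conj_eq_of_iterate_commutator_eq_bot {G H : Type*} [Group G] [Group H] [Finite G]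
    (d : ℕ) {N : Subgroup H} [N.Normal] (hN : (fun K : Subgroup H => ⁅K, K⁆)^[d] N = ⊥)
    (hcop : (Nat.card N).Coprime (Nat.card G)) {f₁ f₂ : G →* H}
    (h : (QuotientGroup.mk' N).comp f₁ = (QuotientGroup.mk' N).comp f₂) :
    ∃ n ∈ N, ∀ x, f₁ x = n⁻¹ * f₂ x * n := by
  induction d generalizing N f₂ with
  | zero =>
    subst hN
    refine ⟨1, one_mem _, fun x => ?_⟩
    simpa using inv_mul_eq_one.mp (mem_bot.mp (QuotientGroup.eq.mp (DFunLike.congr_fun h x)))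
  | succ d ih =>
    set π := QuotientGroup.mk' ⁅N, N⁆
    have := N.isMulCommutative_map_mk'_commutator
    have := Normal.map ‹N.Normal› π (QuotientGroup.mk'_surjective _)
    obtain ⟨_, ⟨m, hmN, rfl⟩, hm⟩ := exists_conj_eq_of_isMulCommutative
      (hcop.coprime_dvd_left (card_map_dvd N π)) (QuotientGroup.mk'_map_comp_eq π h)
    obtain ⟨k, hk, hf⟩ := ih (N := ⁅N, N⁆) hN
      (hcop.coprime_dvd_left (card_dvd_of_le (commutator_le_left N N)))
      (f₂ := (MulAut.conj m⁻¹).toMonoidHom.comp f₂) (by ext x; simpa [π] using hm x)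
    refine ⟨m * k, N.mul_mem hmN (commutator_le_left N N hk), fun x => ?_⟩
    simp [hf x, mul_assoc]

theorem exists_conj_eq_of_isSolvable {G H : Type*} [Group G] [Group H] [Finite G]
    {N : Subgroup H} [N.Normal] (hsol : Group.IsSolvable N)
    (hcop : (Nat.card N).Coprime (Nat.card G)) {f₁ f₂ : G →* H}
    (h : (QuotientGroup.mk' N).comp f₁ = (QuotientGroup.mk' N).comp f₂) :
    ∃ n ∈ N, ∀ x, f₁ x = n⁻¹ * f₂ x * n :=
  have ⟨d, hd⟩ := exists_iterate_commutator_eq_bot hsol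
  exists_conj_eq_of_iterate_commutator_eq_bot d hd hcop h

theorem lifts_conjugate_solvable_kernel_general {G H : Type*} [Group G] [Group H]
    [Finite G] (N : Subgroup H) [N.Normal]
    (hsol : IsSolvable N)
    (hcop : Nat.Coprime (Nat.card N) (Nat.card G))
    (f : G →* H ⧸ N) (f₁ f₂ : G →* H)
    (h₁ : (QuotientGroup.mk' N).comp f₁ = f)
    (h₂ : (QuotientGroup.mk' N).comp f₂ = f) :
    ∃ n ∈ N, ∀ x : G, f₁ x = n⁻¹ * f₂ x * n :=
  exists_conj_eq_of_isSolvable hsol hcop (h₁.trans h₂.symm)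

/-- If `N ⊴ H` is a soluble normal subgroup with `|N|` coprime to `|G|`, then
any two homomorphisms `f₁, f₂ : G → H` lifting the same homomorphism
`f : G → H/N` are conjugate by an element of `N`. -/
theorem lifts_conjugate_solvable_kernel {G H : Type*} [Group G] [Group H]
    [Finite G] [Finite H] (N : Subgroup H) [N.Normal]
    (hsol : IsSolvable N)
    (hcop : Nat.Coprime (Nat.card N) (Nat.card G))
    (f : G →* H ⧸ N) (f₁ f₂ : G →* H)
    (h₁ : (QuotientGroup.mk' N).comp f₁ = f)
    (h₂ : (QuotientGroup.mk' N).comp f₂ = f) :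
    ∃ n ∈ N, ∀ x : G, f₁ x = n⁻¹ * f₂ x * n :=
  lifts_conjugate_solvable_kernel_general N hsol hcop f f₁ f₂ h₁ h₂
end
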